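/- Let β, γ, C₁, t, A₀ > 0 and let (A_n)_{n≥0} be a sequence of nonnegative reals with A₀ given, satisfying the recurrence inequality A_{n+2} ≤ C₁ 2^{n(1+γ+β)} A_n^{1+β} K^{−γ} (1/(tK) + 1)^{1+β} for all n ≥ 0, where Q = 2^{(γ+1+β)/β} and K = max( (2^{1+β} C₁ Q²)^{1/γ}, (2^{1+β} C₁ Q²)^{1/(1+β+γ)} ) · max( A₀^{β/γ}, A₀^{β/(γ+1+β)} t^{−(1+β)/(1+γ+β)} ). Then A_{2n} ≤ A₀ Q^{−2n} for every n ≥ 0; in particular A_{2n} → 0 as n → ∞. -/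
import Mathlib


open MeasureTheory Real Filter Set

noncomputable section

/-- Velocity space ℝ³. -/
abbrev V3 : Type := EuclideanSpace ℝ (Fin 3)

/-- Japanese bracket ⟨v⟩ = (1+|v|²)^{1/2}. -/
def jap (v : V3) : ℝ := Real.sqrt (1 + ‖v‖ ^ 2)

/-- Partial derivative in the i-th coordinate direction. -/
def pd (i : Fin 3) (g : V3 → ℝ) (v : V3) : ℝ :=
  fderiv ℝ g v (EuclideanSpace.single i 1)

/-- Projection matrix Π(z) = Id − z⊗z/|z|². -/
def projPi (z : V3) (i j : Fin 3) : ℝ :=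
  (if i = j then (1 : ℝ) else 0) - z i * z j / ‖z‖ ^ 2

/-- Landau–Coulomb diffusion matrix A[f]. -/
def coeffA (f : V3 → ℝ) (v : V3) (i j : Fin 3) : ℝ :=
  (8 * π)⁻¹ * ∫ w : V3, projPi (v - w) i j / ‖v - w‖ * f w

/-- Newtonian potential a[f] = (−Δ)⁻¹ f. -/
def coeffa (f : V3 → ℝ) (v : V3) : ℝ :=
  (4 * π)⁻¹ * ∫ w : V3, f w / ‖v - w‖

/-- The homogeneous Landau–Coulomb equation
    ∂_t f = ∇·(A[f]∇f − f ∇a[f]), pointwise at (t,v). -/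
def LandauEqAt (f : ℝ → V3 → ℝ) (t : ℝ) (v : V3) : Prop :=
  deriv (fun s => f s v) t =
    ∑ i : Fin 3, pd i
      (fun w => (∑ j : Fin 3, coeffA (f t) w i j * pd j (f t) w)
        - f t w * pd i (coeffa (f t)) w) v

/-- Normalization: unit mass, zero momentum, energy 3. -/
def IsNormalized (f : V3 → ℝ) : Prop :=
  (∫ v : V3, f v) = 1 ∧ (∀ i : Fin 3, (∫ v : V3, f v * v i) = 0) ∧
    (∫ v : V3, f v * ‖v‖ ^ 2) = 3

/-- Schwartz class function. -/
def IsSchwartz (g : V3 → ℝ) : Prop := ∃ h : SchwartzMap V3 ℝ, ⇑h = g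

/-- Distributional (weak) solution of the Landau–Coulomb equation on (0,T). -/
def IsWeakLandauSolution (T : ℝ) (g : ℝ → V3 → ℝ) : Prop :=
  ∀ φ : ℝ × V3 → ℝ, ContDiff ℝ (⊤ : ℕ∞) φ → HasCompactSupport φ →
    (Function.support φ ⊆ Set.Ioo 0 T ×ˢ (Set.univ : Set V3)) →
    (∫ t in Set.Ioo 0 T, ∫ v : V3, φ (t, v) * deriv (fun s => g s v) t) =
      - ∫ t in Set.Ioo 0 T, ∫ v : V3, ∑ i : Fin 3,
          (fderiv ℝ φ (t, v) (0, EuclideanSpace.single i 1)) *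
          ((∑ j : Fin 3, coeffA (g t) v i j * pd j (g t) v)
            - g t v * pd i (coeffa (g t)) v)

/-- Membership in L^r(0,T;L^p(ℝ³)). -/
def MemLrLp (r p T : ℝ) (g : ℝ → V3 → ℝ) : Prop :=
  (∀ᵐ t ∂(volume.restrict (Set.Ioo 0 T)), Integrable (fun v : V3 => |g t v| ^ p)) ∧
  IntegrableOn (fun t => (∫ v : V3, |g t v| ^ p) ^ (r / p)) (Set.Ioo 0 T)

/-- g ∈ W^{1,∞}(Ω) for every Ω compactly contained in (0,T] × ℝ³,
    i.e. g is Lipschitz on every compact subset of (0,T] × ℝ³. -/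
def LocLipschitz (T : ℝ) (g : ℝ → V3 → ℝ) : Prop :=
  ∀ K : Set (ℝ × V3), IsCompact K → K ⊆ Set.Ioc 0 T ×ˢ (Set.univ : Set V3) →
    ∃ L : NNReal, LipschitzOnWith L (fun q : ℝ × V3 => g q.1 q.2) K

/-- discrete De Giorgi barrier lemma for superlinear recurrences. -/
theorem de_giorgi_barrier (beta gamma C₁ t A₀ : ℝ) (hbeta : 0 < beta)
    (hgamma : 0 < gamma) (hC : 0 < C₁) (ht : 0 < t) (hA₀ : 0 < A₀)
    (A : ℕ → ℝ) (hA0 : A 0 = A₀) (hAnn : ∀ n, 0 ≤ A n)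
    (Q K : ℝ)
    (hQ : Q = (2 : ℝ) ^ ((gamma + 1 + beta) / beta))
    (hK : K = max (((2 : ℝ) ^ (1 + beta) * C₁ * Q ^ 2) ^ (1 / gamma))
        (((2 : ℝ) ^ (1 + beta) * C₁ * Q ^ 2) ^ (1 / (1 + beta + gamma))) *
      max (A₀ ^ (beta / gamma))
        (A₀ ^ (beta / (gamma + 1 + beta)) * t ^ (-(1 + beta) / (1 + gamma + beta))))
    (hrec : ∀ n : ℕ, A (n + 2) ≤
      C₁ * (2 : ℝ) ^ ((n : ℝ) * (1 + gamma + beta)) * A n ^ (1 + beta) *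
        K ^ (-gamma) * (1 / (t * K) + 1) ^ (1 + beta)) :
    (∀ n : ℕ, A (2 * n) ≤ A₀ * Q ^ (-(2 * (n : ℝ)))) ∧
      Filter.Tendsto (fun n => A (2 * n)) Filter.atTop (nhds 0) := by
  have hb1 : (0:ℝ) < 1 + beta := by linarith
  have hgb : (0:ℝ) < gamma + 1 + beta := by linarith
  -- Q > 1
  have hQ1 : 1 < Q := by
    rw [hQ]
    have h0 : (0:ℝ) < (gamma + 1 + beta) / beta := by positivity
    calc (1:ℝ) = (2:ℝ) ^ (0:ℝ) := by simp
    _ < (2:ℝ) ^ ((gamma + 1 + beta) / beta) :=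
        Real.rpow_lt_rpow_left_iff (by norm_num) |>.mpr h0
  have hQ0 : 0 < Q := lt_trans one_pos hQ1
  set X : ℝ := (2 : ℝ) ^ (1 + beta) * C₁ * Q ^ 2 with hXdef
  have hX0 : 0 < X :=
    mul_pos (mul_pos (Real.rpow_pos_of_pos (by norm_num) _) hC) (pow_pos hQ0 2)
  have hK0 : 0 < K := by
    rw [hK]
    exact mul_pos
      (lt_of_lt_of_le (Real.rpow_pos_of_pos hX0 _) (le_max_left _ _))
      (lt_of_lt_of_le (Real.rpow_pos_of_pos hA₀ _) (le_max_left _ _))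
  -- two power bounds on K
  have hXA : X * A₀ ^ beta ≤ K ^ gamma := by
    have h1 : X ^ (1 / gamma) * A₀ ^ (beta / gamma) ≤ K := by
      rw [hK]
      exact mul_le_mul (le_max_left _ _) (le_max_left _ _)
        (Real.rpow_nonneg hA₀.le _) (le_trans (Real.rpow_nonneg hX0.le _) (le_max_left _ _))
    calc X * A₀ ^ beta = (X ^ (1 / gamma) * A₀ ^ (beta / gamma)) ^ gamma := by
          rw [Real.mul_rpow (Real.rpow_nonneg hX0.le _) (Real.rpow_nonneg hA₀.le _),
            ← Real.rpow_mul hX0.le, ← Real.rpow_mul hA₀.le,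
            one_div_mul_cancel hgamma.ne', div_mul_cancel₀ _ hgamma.ne', Real.rpow_one]
      _ ≤ K ^ gamma := Real.rpow_le_rpow (by positivity) h1 hgamma.le
  have hXAt : X * A₀ ^ beta * t ^ (-(1 + beta)) ≤ K ^ (gamma + 1 + beta) := by
    have h1 : X ^ (1 / (1 + beta + gamma)) *
        (A₀ ^ (beta / (gamma + 1 + beta)) * t ^ (-(1 + beta) / (1 + gamma + beta))) ≤ K := by
      rw [hK]
      exact mul_le_mul (le_max_right _ _) (le_max_right _ _)
        (by positivity) (le_trans (Real.rpow_nonneg hX0.le _) (le_max_left _ _))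
    calc X * A₀ ^ beta * t ^ (-(1 + beta))
        = (X ^ (1 / (1 + beta + gamma)) *
            (A₀ ^ (beta / (gamma + 1 + beta)) * t ^ (-(1 + beta) / (1 + gamma + beta)))) ^
            (gamma + 1 + beta) := by
          rw [Real.mul_rpow (Real.rpow_nonneg hX0.le _) (by positivity),
            Real.mul_rpow (Real.rpow_nonneg hA₀.le _) (Real.rpow_nonneg ht.le _),
            ← Real.rpow_mul hX0.le, ← Real.rpow_mul hA₀.le, ← Real.rpow_mul ht.le]
          rw [show 1 / (1 + beta + gamma) * (gamma + 1 + beta) = 1 by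
              field_simp; ring,
            show beta / (gamma + 1 + beta) * (gamma + 1 + beta) = beta by
              field_simp,
            show -(1 + beta) / (1 + gamma + beta) * (gamma + 1 + beta) = -(1 + beta) by
              rw [div_mul_eq_mul_div, mul_div_assoc,
                show (gamma + 1 + beta) / (1 + gamma + beta) = 1 by
                  rw [div_eq_one_iff_eq (by linarith)]; ring, mul_one],
            Real.rpow_one, mul_assoc]
      _ ≤ K ^ (gamma + 1 + beta) := Real.rpow_le_rpow (by positivity) h1 hgb.le
  -- the key smallness inequality
  have hkey : C₁ * A₀ ^ beta * K ^ (-gamma) * (1 / (t * K) + 1) ^ (1 + beta) * Q ^ 2 ≤ 1 := by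
    have htK : 0 < t * K := mul_pos ht hK0
    have hmax : (1 / (t * K) + 1) ^ (1 + beta) ≤
        (2:ℝ) ^ (1 + beta) * max (1 / (t * K)) 1 ^ (1 + beta) := by
      rw [← Real.mul_rpow (by norm_num) (le_max_of_le_right zero_le_one)]
      apply Real.rpow_le_rpow (by positivity) _ hb1.le
      have h1 : 1 / (t * K) ≤ max (1 / (t * K)) 1 := le_max_left _ _
      have h2 : (1:ℝ) ≤ max (1 / (t * K)) 1 := le_max_right _ _
      linarith
    rcases le_or_gt (1 / (t * K)) 1 with hle | hlt
    · have : (1 / (t * K) + 1) ^ (1 + beta) ≤ (2:ℝ) ^ (1 + beta) := by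
        rw [max_eq_right hle, Real.one_rpow, mul_one] at hmax; exact hmax
      have hfin : X * A₀ ^ beta * K ^ (-gamma) ≤ 1 := by
        rw [Real.rpow_neg hK0.le, ← div_eq_mul_inv, div_le_one (Real.rpow_pos_of_pos hK0 _)]
        exact hXA
      calc C₁ * A₀ ^ beta * K ^ (-gamma) * (1 / (t * K) + 1) ^ (1 + beta) * Q ^ 2
          ≤ C₁ * A₀ ^ beta * K ^ (-gamma) * (2:ℝ) ^ (1 + beta) * Q ^ 2 := by
            apply mul_le_mul_of_nonneg_right _ (by positivity)
            exact mul_le_mul_of_nonneg_left this (by positivity)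
        _ = X * A₀ ^ beta * K ^ (-gamma) := by rw [hXdef]; ring
        _ ≤ 1 := hfin
    · have hmax2 : (1 / (t * K) + 1) ^ (1 + beta) ≤
          (2:ℝ) ^ (1 + beta) * (t ^ (-(1 + beta)) * K ^ (-(1 + beta))) := by
        rw [max_eq_left hlt.le] at hmax
        refine hmax.trans (le_of_eq ?_)
        congr 1
        rw [one_div, ← Real.rpow_neg_one (t * K), ← Real.rpow_mul htK.le,
          show (-1:ℝ) * (1 + beta) = -(1 + beta) by ring, Real.mul_rpow ht.le hK0.le]
      have hfin : X * A₀ ^ beta * t ^ (-(1 + beta)) * (K ^ (-gamma) * K ^ (-(1 + beta))) ≤ 1 := by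
        rw [← Real.rpow_add hK0, show -gamma + -(1 + beta) = -(gamma + 1 + beta) by ring,
          Real.rpow_neg hK0.le, ← div_eq_mul_inv,
          div_le_one (Real.rpow_pos_of_pos hK0 _)]
        exact hXAt
      calc C₁ * A₀ ^ beta * K ^ (-gamma) * (1 / (t * K) + 1) ^ (1 + beta) * Q ^ 2
          ≤ C₁ * A₀ ^ beta * K ^ (-gamma) *
              ((2:ℝ) ^ (1 + beta) * (t ^ (-(1 + beta)) * K ^ (-(1 + beta)))) * Q ^ 2 := by
            apply mul_le_mul_of_nonneg_right _ (by positivity)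
            exact mul_le_mul_of_nonneg_left hmax2 (by positivity)
        _ = X * A₀ ^ beta * t ^ (-(1 + beta)) * (K ^ (-gamma) * K ^ (-(1 + beta))) := by
            rw [hXdef]; ring
        _ ≤ 1 := hfin
  -- main induction
  have hmain : ∀ n : ℕ, A (2 * n) ≤ A₀ * Q ^ (-(2 * (n : ℝ))) := by
    intro n
    induction n with
    | zero => simp [hA0]
    | succ n ih =>
      have hrec2 := hrec (2 * n)
      have hcast : ((2 * n : ℕ) : ℝ) = 2 * (n : ℝ) := by push_cast; ring
      have hA2n : A (2 * n) ^ (1 + beta) ≤ (A₀ * Q ^ (-(2 * (n : ℝ)))) ^ (1 + beta) :=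
        Real.rpow_le_rpow (hAnn _) ih hb1.le
      have e1 : (2:ℝ) ^ ((2 * (n:ℝ)) * (1 + gamma + beta)) = Q ^ ((2 * (n:ℝ)) * beta) := by
        rw [hQ, ← Real.rpow_mul (by norm_num : (0:ℝ) ≤ 2)]
        congr 1
        field_simp
        ring
      have e2 : (A₀ * Q ^ (-(2 * (n:ℝ)))) ^ (1 + beta) =
          (A₀ * A₀ ^ beta) * Q ^ (-(2 * (n:ℝ)) * (1 + beta)) := by
        rw [Real.mul_rpow hA₀.le (Real.rpow_nonneg hQ0.le _), ← Real.rpow_mul hQ0.le,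
          show (1:ℝ) + beta = 1 + beta from rfl, Real.rpow_add hA₀, Real.rpow_one]
      have eQ : Q ^ ((2 * (n:ℝ)) * beta) * Q ^ (-(2 * (n:ℝ)) * (1 + beta)) =
          Q ^ (2:ℝ) * Q ^ (-(2 * ((n:ℝ) + 1))) := by
        rw [← Real.rpow_add hQ0, ← Real.rpow_add hQ0]
        congr 1
        ring
      have eQ2 : Q ^ (2:ℝ) = Q ^ (2:ℕ) := by
        rw [← Real.rpow_natCast Q 2]; norm_num
      have eqn : C₁ * (2:ℝ) ^ ((2 * (n:ℝ)) * (1 + gamma + beta)) *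
            (A₀ * Q ^ (-(2 * (n:ℝ)))) ^ (1 + beta) * K ^ (-gamma) *
            (1 / (t * K) + 1) ^ (1 + beta)
          = (C₁ * A₀ ^ beta * K ^ (-gamma) * (1 / (t * K) + 1) ^ (1 + beta) * Q ^ 2) *
            (A₀ * Q ^ (-(2 * ((n:ℝ) + 1)))) := by
        rw [e1, e2, ← eQ2]
        linear_combination (C₁ * (A₀ * A₀ ^ beta) * K ^ (-gamma) *
          (1 / (t * K) + 1) ^ (1 + beta)) * eQ
      have hpos2 : 0 < A₀ * Q ^ (-(2 * ((n:ℝ) + 1))) :=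
        mul_pos hA₀ (Real.rpow_pos_of_pos hQ0 _)
      have step : A (2 * (n + 1)) ≤
          (C₁ * A₀ ^ beta * K ^ (-gamma) * (1 / (t * K) + 1) ^ (1 + beta) * Q ^ 2) *
            (A₀ * Q ^ (-(2 * ((n:ℝ) + 1)))) := by
        rw [show 2 * (n + 1) = 2 * n + 2 by ring, ← eqn]
        refine hrec2.trans ?_
        rw [hcast] at hrec2 ⊢
        apply mul_le_mul_of_nonneg_right _ (by positivity)
        apply mul_le_mul_of_nonneg_right _ (Real.rpow_nonneg hK0.le _)
        exact mul_le_mul_of_nonneg_left hA2n (by positivity)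
      calc A (2 * (n + 1)) ≤ _ := step
        _ ≤ 1 * (A₀ * Q ^ (-(2 * ((n:ℝ) + 1)))) :=
            mul_le_mul_of_nonneg_right hkey hpos2.le
        _ = A₀ * Q ^ (-(2 * (((n:ℕ):ℝ) + 1))) := by rw [one_mul]
        _ = A₀ * Q ^ (-(2 * (((n + 1 : ℕ)):ℝ))) := by push_cast; ring_nf
  refine ⟨hmain, ?_⟩
  have hQinv : |Q ^ (-(2:ℝ))| < 1 := by
    rw [abs_of_pos (Real.rpow_pos_of_pos hQ0 _)]
    rw [Real.rpow_neg hQ0.le]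
    rw [inv_lt_one_iff₀]
    right
    calc (1:ℝ) < Q := hQ1
      _ = Q ^ (1:ℝ) := (Real.rpow_one Q).symm
      _ ≤ Q ^ (2:ℝ) := Real.rpow_le_rpow_left_iff hQ1 |>.mpr (by norm_num)
  have hgeo : Filter.Tendsto (fun n : ℕ => A₀ * Q ^ (-(2 * (n : ℝ)))) Filter.atTop (nhds 0) := by
    have heq : ∀ n : ℕ, A₀ * Q ^ (-(2 * (n : ℝ))) = A₀ * (Q ^ (-(2:ℝ))) ^ n := by
      intro n
      rw [← Real.rpow_natCast (Q ^ (-(2:ℝ))) n, ← Real.rpow_mul hQ0.le]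
      congr 2
      ring
    simp only [heq]
    have := tendsto_pow_atTop_nhds_zero_of_abs_lt_one hQinv
    simpa using this.const_mul A₀
  exact squeeze_zero (fun n => hAnn _) hmain hgeo
end
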